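/- Let E be a real Banach space, let τ_1, …, τ_N > 0 be time steps, and let u : ℝ → E be three times continuously differentiable on [0, t_N]. For 1 ≤ j ≤ N define the consistency error η^j := D_2 (u∘t)^j − u'(t_j), i.e. η^1 := (u(t_1) − u(t_0))/τ_1 − u'(t_1) and η^j := b^{(j)}_0(u(t_j) − u(t_{j−1})) + b^{(j)}_1(u(t_{j−1}) − u(t_{j−2})) − u'(t_j) for j ≥ 2. Then for every 1 ≤ n ≤ N, Σ_{k=1}^n Σ_{j=1}^k θ^{(k)}_{k−j} ‖η^j‖ ≤ τ_1·(Σ_{k=1}^n θ̂^{(k)}_{k−1})·∫_0^{t_1} ‖u''(t)‖ dt + (3/2)·Σ_{j=1}^n τ_j²·(Σ_{k=j}^n θ̂^{(k)}_{k−j})·∫_{t_{j−1}}^{t_j} ‖u'''(t)‖ dt. -/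

import Mathlib

/-!
By Taylor's formula with integral remainder around `t_j`, and because the BDF2 formula is exact on
quadratics, `η^j` is the integral of `u'''` against a Peano kernel bounded by `τ_j` on
`[t_{j-1}, t_j]` and by `|b^{(j)}_1| τ_{j-1}² / 2` on `[t_{j-2}, t_{j-1}]` (for `j = 1`, `η^1` is
an integral of `u''` with kernel bounded by `τ_1`). Weighted by DOC kernels, the recursion
`θ^{(k)}_{k-j} |b^{(j)}_1| = θ̂^{(k)}_{k-j+1}` turns the second part into half of the main part of
step `j - 1`, and `θ^{(k)}_{k-j} τ_j ≤ τ_j² θ̂^{(k)}_{k-j}` because `τ_j b^{(j)}_0 ≥ 1`. Summing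
over `k` and swapping the order of summation gives the bound.
-/

open Finset

/-- BDF2 convolution kernels `b^{(n)}_j` built from the step sizes `τ`. -/
noncomputable def bdf2 (τ : ℕ → ℝ) (n j : ℕ) : ℝ :=
  if n = 1 then (if j = 0 then 1 / τ 1 else 0)
  else if j = 0 then (1 + 2 * (τ n / τ (n - 1))) / (τ n * (1 + τ n / τ (n - 1)))
  else if j = 1 then -(τ n / τ (n - 1)) ^ 2 / (τ n * (1 + τ n / τ (n - 1)))
  else 0

/-- DOC kernels: `doc τ n g = θ^{(n)}_g`, defined by the recursive procedure
`θ^{(n)}_0 = 1/b^{(n)}_0`, `θ^{(n)}_{n-k} = -(1/b^{(k)}_0) ∑_{j=k+1}^n θ^{(n)}_{n-j} b^{(j)}_{j-k}`. -/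
noncomputable def doc (τ : ℕ → ℝ) (n : ℕ) : ℕ → ℝ
  | 0 => 1 / bdf2 τ n 0
  | (g + 1) =>
    -(1 / bdf2 τ (n - (g + 1)) 0) *
      ∑ i ∈ (Finset.range (g + 1)).attach,
        doc τ n i.1 * bdf2 τ (n - i.1) (g + 1 - i.1)
  decreasing_by exact Finset.mem_range.mp i.2

/-- The variable-step BDF2 formula `D_2 v^n = ∑_{k=1}^n b^{(n)}_{n-k} (v^k - v^{k-1})`. -/
noncomputable def D2 {V : Type*} [AddCommGroup V] [Module ℝ V]
    (τ : ℕ → ℝ) (v : ℕ → V) (n : ℕ) : V :=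
  ∑ k ∈ Finset.Icc 1 n, bdf2 τ n (n - k) • (v k - v (k - 1))

/-- Time levels `t_n = τ_1 + ⋯ + τ_n`. -/
noncomputable def tlv (τ : ℕ → ℝ) (n : ℕ) : ℝ := ∑ i ∈ Finset.Icc 1 n, τ i

lemma sum_Icc_two_sub_one_le {a : ℕ → ℝ} {k : ℕ} (ha : ∀ j ∈ Icc 1 k, 0 ≤ a j) :
    ∑ j ∈ Icc 2 k, a (j - 1) ≤ ∑ j ∈ Icc 1 k, a j := by
  rw [← sum_image (s := Icc 2 k) (g := (· - 1)) fun i hi j hj h => by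
    simp only [coe_Icc, Set.mem_Icc] at hi hj h; omega]
  exact sum_le_sum_of_subset_of_nonneg (fun j => by simp only [mem_image, mem_Icc]; omega)
    fun j hj _ => ha j hj

namespace BDF2

variable {τ : ℕ → ℝ}

lemma bdf2_one_zero : bdf2 τ 1 0 = (τ 1)⁻¹ := by
  simp [bdf2]

lemma bdf2_zero_of_two_le {n : ℕ} (hn : 2 ≤ n) :
    bdf2 τ n 0 = (1 + 2 * (τ n / τ (n - 1))) / (τ n * (1 + τ n / τ (n - 1))) := by
  rw [bdf2, if_neg (by omega), if_pos rfl]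

lemma bdf2_one_of_two_le {n : ℕ} (hn : 2 ≤ n) :
    bdf2 τ n 1 = -(τ n / τ (n - 1)) ^ 2 / (τ n * (1 + τ n / τ (n - 1))) := by
  rw [bdf2, if_neg (by omega), if_neg one_ne_zero, if_pos rfl]

lemma bdf2_eq_zero_of_two_le {n j : ℕ} (hj : 2 ≤ j) : bdf2 τ n j = 0 := by
  unfold bdf2
  split_ifs <;> first | rfl | omega

lemma doc_succ (n g : ℕ) :
    doc τ n (g + 1) = -(bdf2 τ (n - g) 1 / bdf2 τ (n - (g + 1)) 0) * doc τ n g := by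
  rw [doc, sum_attach (range (g + 1)) (fun i => doc τ n i * bdf2 τ (n - i) (g + 1 - i)),
    sum_eq_single_of_mem g (self_mem_range_succ g)]
  · rw [Nat.add_sub_cancel_left]
    ring
  · intro i hi hig
    rw [bdf2_eq_zero_of_two_le (by rw [mem_range] at hi; omega), mul_zero]

lemma D2_one {V : Type*} [AddCommGroup V] [Module ℝ V] (v : ℕ → V) :
    D2 τ v 1 = bdf2 τ 1 0 • (v 1 - v 0) := by
  simp [D2]

lemma D2_of_two_le {V : Type*} [AddCommGroup V] [Module ℝ V] (v : ℕ → V) {n : ℕ} (hn : 2 ≤ n) :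
    D2 τ v n = bdf2 τ n 1 • (v (n - 1) - v (n - 2)) + bdf2 τ n 0 • (v n - v (n - 1)) := by
  have hsplit : Icc 1 n = insert (n - 1) (insert n (Icc 1 (n - 2))) := by
    ext x; simp only [mem_insert, mem_Icc]; omega
  rw [D2, hsplit, sum_insert (by simp only [mem_insert, mem_Icc]; omega),
    sum_insert (by simp only [mem_Icc]; omega),
    sum_eq_zero fun k hk => by
      rw [bdf2_eq_zero_of_two_le (by simp only [mem_Icc] at hk; omega), zero_smul],
    add_zero, Nat.sub_sub_self (by omega), Nat.sub_self, show n - 1 - 1 = n - 2 by omega]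

lemma tlv_zero : tlv τ 0 = 0 := by simp [tlv]

lemma tlv_one : tlv τ 1 = τ 1 := by simp [tlv]

lemma tlv_of_one_le {n : ℕ} (hn : 1 ≤ n) : tlv τ n = tlv τ (n - 1) + τ n := by
  obtain ⟨m, rfl⟩ := Nat.exists_eq_add_of_le' hn
  rw [tlv, sum_Icc_succ_top (by omega), Nat.add_sub_cancel, tlv]

lemma bdf2_one_nonpos_of_two_le {n : ℕ} (hn : 2 ≤ n) (hτn : 0 < τ n) (hτn' : 0 < τ (n - 1)) :
    bdf2 τ n 1 ≤ 0 := by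
  rw [bdf2_one_of_two_le hn, neg_div]
  exact neg_nonpos.mpr (by positivity)

lemma doc_mul_neg_bdf2_one {k j : ℕ} (hj : 2 ≤ j) (hjk : j ≤ k) (hb : bdf2 τ (j - 1) 0 ≠ 0) :
    doc τ k (k - j) * -bdf2 τ j 1 = doc τ k (k - (j - 1)) * bdf2 τ (j - 1) 0 := by
  rw [show k - (j - 1) = k - j + 1 by omega, doc_succ, show k - (k - j) = j by omega,
    show k - (k - j + 1) = j - 1 by omega]
  field_simp

section Positive

variable {N : ℕ} (hτ : ∀ k, 1 ≤ k → k ≤ N → 0 < τ k)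
include hτ

lemma tlv_mono {a b : ℕ} (hab : a ≤ b) (hb : b ≤ N) : tlv τ a ≤ tlv τ b :=
  sum_le_sum_of_subset_of_nonneg (Icc_subset_Icc_right hab) fun i hi _ =>
    (hτ i (mem_Icc.mp hi).1 ((mem_Icc.mp hi).2.trans hb)).le

lemma tlv_nonneg {a : ℕ} (ha : a ≤ N) : 0 ≤ tlv τ a :=
  tlv_zero (τ := τ) ▸ tlv_mono hτ (Nat.zero_le a) ha

lemma bdf2_zero_pos {n : ℕ} (h1 : 1 ≤ n) (hN : n ≤ N) : 0 < bdf2 τ n 0 := by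
  obtain rfl | h2 := h1.eq_or_lt
  · simpa [bdf2_one_zero] using hτ 1 le_rfl hN
  · have := hτ n h1 hN
    have := hτ (n - 1) (by omega) (by omega)
    rw [bdf2_zero_of_two_le h2]
    positivity

lemma bdf2_one_nonpos {n : ℕ} (h1 : 1 ≤ n) (hN : n ≤ N) : bdf2 τ n 1 ≤ 0 := by
  obtain rfl | h2 := h1.eq_or_lt
  · simp [bdf2]
  · exact bdf2_one_nonpos_of_two_le h2 (hτ n h1 hN) (hτ (n - 1) (by omega) (by omega))

lemma one_le_mul_bdf2_zero {n : ℕ} (h1 : 1 ≤ n) (hN : n ≤ N) : 1 ≤ τ n * bdf2 τ n 0 := by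
  obtain rfl | h2 := h1.eq_or_lt
  · simp [bdf2_one_zero, (hτ 1 le_rfl hN).ne']
  · have hn := hτ n h1 hN
    have := hτ (n - 1) (by omega) (by omega)
    have hr : 0 < τ n / τ (n - 1) := by positivity
    rw [bdf2_zero_of_two_le h2, ← mul_div_assoc, mul_div_mul_left _ _ hn.ne',
      le_div_iff₀ (by positivity)]
    linarith

lemma doc_nonneg {k : ℕ} (hk : k ≤ N) : ∀ g < k, 0 ≤ doc τ k g
  | 0, hg => by rw [doc]; exact (one_div_pos.mpr (bdf2_zero_pos hτ hg hk)).le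
  | g + 1, hg => by
    rw [doc_succ]
    have hb1 := bdf2_one_nonpos hτ (n := k - g) (by omega) (by omega)
    have hb0 := bdf2_zero_pos hτ (n := k - (g + 1)) (by omega) (by omega)
    exact mul_nonneg (neg_nonneg.mpr (div_nonpos_of_nonpos_of_nonneg hb1 hb0.le))
      (doc_nonneg hk g (by omega))

variable {G F : ℕ → ℝ} {J : ℝ}

/-- The DOC recursion moves the `b^{(j)}_1`-part of the local bound for `η^j` onto step `j - 1`,
where it costs half of the main part; this is the origin of the factor `3/2`. -/
lemma doc_level_sum_le {k : ℕ} (hk : 1 ≤ k) (hkN : k ≤ N) (hF : ∀ j ∈ Icc 1 k, 0 ≤ F j)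
    (hG₁ : G 1 ≤ J)
    (hG : ∀ j ∈ Icc 2 k, G j ≤ τ j * F j + -bdf2 τ j 1 * (τ (j - 1) ^ 2 / 2) * F (j - 1)) :
    ∑ j ∈ Icc 1 k, doc τ k (k - j) * G j ≤
      τ 1 * (doc τ k (k - 1) * bdf2 τ 1 0) * J +
        3 / 2 * ∑ j ∈ Icc 1 k, τ j ^ 2 * (doc τ k (k - j) * bdf2 τ j 0) * F j := by
  set a : ℕ → ℝ := fun j => τ j ^ 2 * (doc τ k (k - j) * bdf2 τ j 0) * F j
  have hdoc : ∀ j ∈ Icc 1 k, 0 ≤ doc τ k (k - j) := fun j hj =>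
    doc_nonneg hτ hkN _ (by simp only [mem_Icc] at hj; omega)
  have ha : ∀ j ∈ Icc 1 k, 0 ≤ a j := fun j hj => by
    have := bdf2_zero_pos hτ (mem_Icc.mp hj).1 ((mem_Icc.mp hj).2.trans hkN)
    have := hdoc j hj
    have := hF j hj
    positivity
  have h₁ : doc τ k (k - 1) * G 1 ≤ τ 1 * (doc τ k (k - 1) * bdf2 τ 1 0) * J := by
    have hτ₁ := (hτ 1 le_rfl (hk.trans hkN)).ne'
    rw [bdf2_one_zero, mul_left_comm, mul_inv_cancel₀ hτ₁, mul_one]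
    exact mul_le_mul_of_nonneg_left hG₁ (hdoc 1 (by simp [hk]))
  have h₂ : ∀ j ∈ Icc 2 k, doc τ k (k - j) * G j ≤ a j + a (j - 1) / 2 := by
    intro j hj
    simp only [mem_Icc] at hj
    have hj₁ : j ∈ Icc 1 k := by simp only [mem_Icc]; omega
    have hτj := hτ j (by omega) (hj.2.trans hkN)
    have hb₀ := bdf2_zero_pos hτ (n := j - 1) (by omega) (by omega)
    have hshift := doc_mul_neg_bdf2_one (k := k) hj.1 hj.2 hb₀.ne'
    have hmain : doc τ k (k - j) * τ j ≤ τ j ^ 2 * (doc τ k (k - j) * bdf2 τ j 0) := by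
      have := one_le_mul_bdf2_zero hτ (by omega) (hj.2.trans hkN)
      nlinarith [mul_nonneg (hdoc j hj₁) hτj.le]
    calc doc τ k (k - j) * G j
        ≤ doc τ k (k - j) * (τ j * F j + -bdf2 τ j 1 * (τ (j - 1) ^ 2 / 2) * F (j - 1)) :=
          mul_le_mul_of_nonneg_left (hG j (by simp only [mem_Icc]; omega)) (hdoc j hj₁)
      _ = doc τ k (k - j) * τ j * F j +
            doc τ k (k - j) * -bdf2 τ j 1 * (τ (j - 1) ^ 2 / 2) * F (j - 1) := by ring
      _ ≤ a j + a (j - 1) / 2 := by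
          rw [hshift]
          have : a (j - 1) / 2 =
              doc τ k (k - (j - 1)) * bdf2 τ (j - 1) 0 * (τ (j - 1) ^ 2 / 2) * F (j - 1) := by
            simp only [a]; ring
          rw [this]
          exact add_le_add (mul_le_mul_of_nonneg_right hmain (hF j hj₁)) le_rfl
  calc ∑ j ∈ Icc 1 k, doc τ k (k - j) * G j
      = doc τ k (k - 1) * G 1 + ∑ j ∈ Icc 2 k, doc τ k (k - j) * G j := by
        rw [← insert_Icc_add_one_left_eq_Icc hk, sum_insert (by simp)]
        rfl
    _ ≤ τ 1 * (doc τ k (k - 1) * bdf2 τ 1 0) * J + ∑ j ∈ Icc 2 k, (a j + a (j - 1) / 2) :=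
        add_le_add h₁ (sum_le_sum h₂)
    _ ≤ τ 1 * (doc τ k (k - 1) * bdf2 τ 1 0) * J +
          (∑ j ∈ Icc 1 k, a j + (∑ j ∈ Icc 1 k, a j) / 2) := by
        rw [sum_add_distrib, ← sum_div]
        refine add_le_add le_rfl (add_le_add ?_ (by gcongr; exact sum_Icc_two_sub_one_le ha))
        exact sum_le_sum_of_subset_of_nonneg (Icc_subset_Icc_left one_le_two)
            fun j hj _ => ha j hj
    _ = τ 1 * (doc τ k (k - 1) * bdf2 τ 1 0) * J + 3 / 2 * ∑ j ∈ Icc 1 k, a j := by ring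

lemma doc_weighted_sum_le (hF : ∀ j ∈ Icc 1 N, 0 ≤ F j) (hG₁ : G 1 ≤ J)
    (hG : ∀ j ∈ Icc 2 N, G j ≤ τ j * F j + -bdf2 τ j 1 * (τ (j - 1) ^ 2 / 2) * F (j - 1)) :
    ∑ k ∈ Icc 1 N, ∑ j ∈ Icc 1 k, doc τ k (k - j) * G j ≤
      τ 1 * (∑ k ∈ Icc 1 N, doc τ k (k - 1) * bdf2 τ 1 0) * J +
        3 / 2 * ∑ j ∈ Icc 1 N,
          τ j ^ 2 * (∑ k ∈ Icc j N, doc τ k (k - j) * bdf2 τ j 0) * F j := by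
  have hswap : ∑ k ∈ Icc 1 N, ∑ j ∈ Icc 1 k, τ j ^ 2 * (doc τ k (k - j) * bdf2 τ j 0) * F j =
      ∑ j ∈ Icc 1 N, τ j ^ 2 * (∑ k ∈ Icc j N, doc τ k (k - j) * bdf2 τ j 0) * F j := by
    rw [sum_comm' (t' := Icc 1 N) (s' := fun j => Icc j N)
      (by intro k j; simp only [mem_Icc]; omega)]
    simp only [mul_sum, sum_mul]
  calc ∑ k ∈ Icc 1 N, ∑ j ∈ Icc 1 k, doc τ k (k - j) * G j
      ≤ ∑ k ∈ Icc 1 N, (τ 1 * (doc τ k (k - 1) * bdf2 τ 1 0) * J +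
          3 / 2 * ∑ j ∈ Icc 1 k, τ j ^ 2 * (doc τ k (k - j) * bdf2 τ j 0) * F j) := by
        refine sum_le_sum fun k hk => ?_
        simp only [mem_Icc] at hk
        refine doc_level_sum_le hτ hk.1 hk.2 (fun j hj => hF j ?_) hG₁ (fun j hj => hG j ?_) <;>
          simp only [mem_Icc] at hj ⊢ <;> omega
    _ = _ := by rw [sum_add_distrib, ← sum_mul, ← mul_sum, ← mul_sum, hswap]

end Positive

end BDF2

section Taylor

open Set intervalIntegral

variable {E : Type*} [NormedAddCommGroup E] [NormedSpace ℝ E]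
  {u u' u'' u''' : ℝ → E} {s : Set ℝ} {a b : ℝ}

lemma norm_integral_smul_le_mul {k : ℝ → ℝ} {v : ℝ → E} {C : ℝ} (hab : a ≤ b)
    (hv : ContinuousOn v (Icc a b)) (hk : ∀ x ∈ Ioc a b, |k x| ≤ C) :
    ‖∫ x in a..b, k x • v x‖ ≤ C * ∫ x in a..b, ‖v x‖ := by
  rw [← integral_const_mul]
  refine norm_integral_le_of_norm_le hab (Filter.Eventually.of_forall fun x hx => ?_)
    (ContinuousOn.intervalIntegrable_of_Icc hab (continuousOn_const.mul hv.norm))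
  rw [norm_smul, Real.norm_eq_abs]
  exact mul_le_mul_of_nonneg_right (hk x hx) (norm_nonneg _)

variable [CompleteSpace E] (hab : a ≤ b) (hs : Icc a b ⊆ s)
include hab hs

lemma integral_eq_sub_of_forall_hasDerivWithinAt {f f' : ℝ → E}
    (hf : ∀ x ∈ s, HasDerivWithinAt f (f' x) s x) (hf' : ContinuousOn f' s) :
    ∫ x in a..b, f' x = f b - f a :=
  integral_eq_sub_of_hasDerivAt_of_le hab
    (ContinuousOn.mono (fun x hx => (hf x hx).continuousWithinAt) hs)
    (fun x hx => (hf x (Ioo_subset_Icc_self.trans hs hx)).hasDerivAt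
      (Filter.mem_of_superset (Ioo_mem_nhds hx.1 hx.2) (Ioo_subset_Icc_self.trans hs)))
    (ContinuousOn.intervalIntegrable_of_Icc hab (hf'.mono hs))

variable (hu : ∀ x ∈ s, HasDerivWithinAt u (u' x) s x)
  (hu' : ∀ x ∈ s, HasDerivWithinAt u' (u'' x) s x)
include hu hu'

lemma integral_sub_smul_deriv2 (hcont : ContinuousOn u'' s) :
    ∫ x in a..b, (a - x) • u'' x = u b + (a - b) • u' b - u a := by
  rw [integral_eq_sub_of_forall_hasDerivWithinAt hab hs (f := fun x => u x + (a - x) • u' x)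
    (fun x hx => ?_) (by fun_prop)]
  · simp
  · exact ((hu x hx).add (((hasDerivAt_id' x).hasDerivWithinAt.const_sub a).smul (hu' x hx))).congr_deriv
      (by module)

lemma integral_sq_sub_smul_deriv3 (hu'' : ∀ x ∈ s, HasDerivWithinAt u'' (u''' x) s x)
    (hcont : ContinuousOn u''' s) :
    ∫ x in a..b, ((a - x) ^ 2 / 2) • u''' x =
      u b + (a - b) • u' b + ((a - b) ^ 2 / 2) • u'' b - u a := by
  rw [integral_eq_sub_of_forall_hasDerivWithinAt hab hs
    (f := fun x => u x + (a - x) • u' x + ((a - x) ^ 2 / 2) • u'' x) (fun x hx => ?_)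
    (by fun_prop)]
  · simp
  · have hlin := ((hasDerivAt_id' x).const_sub a).hasDerivWithinAt (s := s)
    exact (((hu x hx).add (hlin.smul (hu' x hx))).add
      (((hlin.fun_pow 2).div_const 2).smul (hu'' x hx))).congr_deriv (by module)

end Taylor

section LocalError

open Set intervalIntegral

variable {E : Type*} [NormedAddCommGroup E] [NormedSpace ℝ E] [CompleteSpace E]
  {u u' u'' u''' : ℝ → E} {s : Set ℝ}

lemma norm_slope_sub_deriv_le {a b : ℝ} (hab : a < b) (hs : Icc a b ⊆ s)
    (hu : ∀ x ∈ s, HasDerivWithinAt u (u' x) s x) (hu' : ∀ x ∈ s, HasDerivWithinAt u' (u'' x) s x)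
    (hcont : ContinuousOn u'' s) :
    ‖(b - a)⁻¹ • (u b - u a) - u' b‖ ≤ ∫ x in a..b, ‖u'' x‖ := by
  have hba : 0 < b - a := sub_pos.mpr hab
  have hrep : (b - a)⁻¹ • (u b - u a) - u' b = (b - a)⁻¹ • ∫ x in a..b, (a - x) • u'' x := by
    rw [integral_sub_smul_deriv2 hab.le hs hu hu' hcont, show a - b = -(b - a) by ring]
    simp only [smul_sub, smul_add, neg_smul, smul_neg, smul_smul, inv_mul_cancel₀ hba.ne', one_smul]
    abel
  have hbound := norm_integral_smul_le_mul (k := fun x => a - x) (C := b - a) hab.le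
    (hcont.mono hs) fun x hx => abs_le.mpr ⟨by linarith [hx.2], by linarith [hx.1]⟩
  rw [hrep, norm_smul, Real.norm_eq_abs, abs_inv, abs_of_pos hba]
  calc (b - a)⁻¹ * ‖∫ x in a..b, (a - x) • u'' x‖
      ≤ (b - a)⁻¹ * ((b - a) * ∫ x in a..b, ‖u'' x‖) := by gcongr
    _ = ∫ x in a..b, ‖u'' x‖ := inv_mul_cancel_left₀ hba.ne' _

/-- `hexact₁`, `hexact₂` say that the two-step formula is exact on quadratics, so Taylor's formula
around `r` turns its error into the integral of `u'''` against a Peano kernel. -/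
lemma norm_two_step_sub_deriv_le {p q r b₀ b₁ : ℝ} (hpq : p ≤ q) (hqr : q ≤ r)
    (hs : Icc p r ⊆ s)
    (hu : ∀ x ∈ s, HasDerivWithinAt u (u' x) s x) (hu' : ∀ x ∈ s, HasDerivWithinAt u' (u'' x) s x)
    (hu'' : ∀ x ∈ s, HasDerivWithinAt u'' (u''' x) s x) (hcont : ContinuousOn u''' s)
    (hb₁ : b₁ ≤ 0) (hexact₁ : b₁ * (r - p) + (b₀ - b₁) * (r - q) = 1)
    (hexact₂ : b₁ * (r - p) ^ 2 + (b₀ - b₁) * (r - q) ^ 2 = 0)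
    (hkernel : ∀ y ∈ Ioc 0 (r - q),
      |(b₀ - b₁) * (y ^ 2 / 2) + b₁ * ((y + (q - p)) ^ 2 / 2)| ≤ r - q) :
    ‖b₁ • (u q - u p) + b₀ • (u r - u q) - u' r‖ ≤
      (r - q) * (∫ x in q..r, ‖u''' x‖) + -b₁ * ((q - p) ^ 2 / 2) * ∫ x in p..q, ‖u''' x‖ := by
  have hint : ∀ c α β, p ≤ α → α ≤ β → β ≤ r →
      IntervalIntegrable (fun x => ((c - x) ^ 2 / 2) • u''' x) MeasureTheory.volume α β :=
    fun c α β hα hαβ hβ => ContinuousOn.intervalIntegrable_of_Icc hαβ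
      (by have := hcont.mono ((Icc_subset_Icc hα hβ).trans hs); fun_prop)
  have hTq := integral_sq_sub_smul_deriv3 hqr ((Icc_subset_Icc hpq le_rfl).trans hs) hu hu' hu''
    hcont
  have hTp := integral_sq_sub_smul_deriv3 (hpq.trans hqr) hs hu hu' hu'' hcont
  rw [← integral_add_adjacent_intervals (hint p p q le_rfl hpq hqr) (hint p q r hpq hqr le_rfl)]
    at hTp
  have hkq : (b₀ - b₁) • (∫ x in q..r, ((q - x) ^ 2 / 2) • u''' x) +
        b₁ • ∫ x in q..r, ((p - x) ^ 2 / 2) • u''' x =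
      ∫ x in q..r, ((b₀ - b₁) * ((q - x) ^ 2 / 2) + b₁ * ((p - x) ^ 2 / 2)) • u''' x := by
    have hq : IntervalIntegrable (fun x => (b₀ - b₁) • ((q - x) ^ 2 / 2) • u''' x)
        MeasureTheory.volume q r := (hint q q r hpq hqr le_rfl).smul _
    have hp : IntervalIntegrable (fun x => b₁ • ((p - x) ^ 2 / 2) • u''' x)
        MeasureTheory.volume q r := (hint p q r hpq hqr le_rfl).smul _
    simp only [add_smul, mul_smul]
    rw [integral_add hq hp, integral_smul, integral_smul]
  have hrep : b₁ • (u q - u p) + b₀ • (u r - u q) - u' r =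
      (∫ x in q..r, ((b₀ - b₁) * ((q - x) ^ 2 / 2) + b₁ * ((p - x) ^ 2 / 2)) • u''' x) +
        b₁ • ∫ x in p..q, ((p - x) ^ 2 / 2) • u''' x := by
    rw [← hkq]
    linear_combination (norm := module) -(b₀ - b₁) • hTq - b₁ • hTp + hexact₁ • u' r
      - hexact₂ • ((1 / 2 : ℝ) • u'' r)
  rw [hrep]
  refine (norm_add_le _ _).trans (add_le_add ?_ ?_)
  · refine norm_integral_smul_le_mul hqr (hcont.mono ((Icc_subset_Icc hpq le_rfl).trans hs))
      fun x hx => ?_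
    convert hkernel (x - q) ⟨by linarith [hx.1], by linarith [hx.2]⟩ using 4 <;> ring
  · rw [norm_smul, Real.norm_eq_abs, abs_of_nonpos hb₁, mul_assoc]
    refine mul_le_mul_of_nonneg_left (norm_integral_smul_le_mul hpq
      (hcont.mono ((Icc_subset_Icc le_rfl hqr).trans hs)) fun x hx => ?_) (neg_nonneg.mpr hb₁)
    rw [abs_of_nonneg (by positivity)]
    nlinarith [hx.1, hx.2]

end LocalError

namespace BDF2

open Set

variable {τ : ℕ → ℝ} {n : ℕ}

section Exactness

variable (hn : 2 ≤ n) (hτn : 0 < τ n) (hτn' : 0 < τ (n - 1))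
include hn hτn hτn'

lemma bdf2_exact_one : bdf2 τ n 1 * (τ (n - 1) + τ n) + (bdf2 τ n 0 - bdf2 τ n 1) * τ n = 1 := by
  rw [bdf2_zero_of_two_le hn, bdf2_one_of_two_le hn]
  field_simp
  ring

lemma bdf2_exact_two :
    bdf2 τ n 1 * (τ (n - 1) + τ n) ^ 2 + (bdf2 τ n 0 - bdf2 τ n 1) * τ n ^ 2 = 0 := by
  rw [bdf2_zero_of_two_le hn, bdf2_one_of_two_le hn]
  field_simp
  ring

/-- The Peano kernel of `D₂` on the last step factors as
`(y - τ_n) ((1 + 2 r_n) y + τ_n) / (2 τ_n (1 + r_n))`. -/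
lemma abs_bdf2_peano_kernel_le {y : ℝ} (hy : y ∈ Ioc 0 (τ n)) :
    |(bdf2 τ n 0 - bdf2 τ n 1) * (y ^ 2 / 2) + bdf2 τ n 1 * ((y + τ (n - 1)) ^ 2 / 2)| ≤ τ n := by
  obtain ⟨hy₀, hy₁⟩ := hy
  set ρ := τ n / τ (n - 1) with hρ
  have hρ₀ : 0 < ρ := by positivity
  have hD : 0 < 2 * τ n * (1 + ρ) := by positivity
  have hfactor : (bdf2 τ n 0 - bdf2 τ n 1) * (y ^ 2 / 2) + bdf2 τ n 1 * ((y + τ (n - 1)) ^ 2 / 2)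
      = (y - τ n) * ((1 + 2 * ρ) * y + τ n) / (2 * τ n * (1 + ρ)) := by
    rw [bdf2_zero_of_two_le hn, bdf2_one_of_two_le hn, hρ]
    field_simp
    ring
  rw [hfactor, abs_le, le_div_iff₀ hD, div_le_iff₀ hD]
  have hK : 0 ≤ (1 + 2 * ρ) * y + τ n := by positivity
  constructor <;> nlinarith [mul_nonneg (sub_nonneg.mpr hy₁) hK, mul_pos hτn hρ₀,
    mul_nonneg (sub_nonneg.mpr hy₁) (mul_nonneg (sub_nonneg.mpr hy₁) hρ₀.le)]

end Exactness

section LocalBounds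

variable {E : Type*} [NormedAddCommGroup E] [NormedSpace ℝ E] [CompleteSpace E]
  {u u' u'' u''' : ℝ → E} {s : Set ℝ}
  (hu : ∀ x ∈ s, HasDerivWithinAt u (u' x) s x) (hu' : ∀ x ∈ s, HasDerivWithinAt u' (u'' x) s x)
include hu hu'

lemma norm_D2_one_sub_deriv_le (hτ₁ : 0 < τ 1) (hs : Icc 0 (tlv τ 1) ⊆ s)
    (hcont : ContinuousOn u'' s) :
    ‖D2 τ (fun m => u (tlv τ m)) 1 - u' (tlv τ 1)‖ ≤ ∫ x in (0 : ℝ)..tlv τ 1, ‖u'' x‖ := by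
  rw [tlv_one] at hs ⊢
  simpa [D2_one, bdf2_one_zero, tlv_one, tlv_zero] using
    norm_slope_sub_deriv_le hτ₁ hs hu hu' hcont

lemma norm_D2_sub_deriv_le (hn : 2 ≤ n) (hτn : 0 < τ n) (hτn' : 0 < τ (n - 1))
    (hs : Icc (tlv τ (n - 2)) (tlv τ n) ⊆ s)
    (hu'' : ∀ x ∈ s, HasDerivWithinAt u'' (u''' x) s x) (hcont : ContinuousOn u''' s) :
    ‖D2 τ (fun m => u (tlv τ m)) n - u' (tlv τ n)‖ ≤
      τ n * (∫ x in tlv τ (n - 1)..tlv τ n, ‖u''' x‖) +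
        -bdf2 τ n 1 * (τ (n - 1) ^ 2 / 2) * ∫ x in tlv τ (n - 2)..tlv τ (n - 1), ‖u''' x‖ := by
  have hq : tlv τ (n - 1) - tlv τ (n - 2) = τ (n - 1) := by
    rw [tlv_of_one_le (n := n - 1) (by omega), show n - 1 - 1 = n - 2 by omega]
    ring
  have hr : tlv τ n - tlv τ (n - 1) = τ n := by
    rw [tlv_of_one_le (by omega : 1 ≤ n)]
    ring
  have hrp : tlv τ n - tlv τ (n - 2) = τ (n - 1) + τ n := by linarith
  have := norm_two_step_sub_deriv_le (q := tlv τ (n - 1)) (b₀ := bdf2 τ n 0) (by linarith)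
    (by linarith) hs hu hu' hu'' hcont (bdf2_one_nonpos_of_two_le hn hτn hτn')
    (by rw [hrp, hr]; exact bdf2_exact_one hn hτn hτn')
    (by rw [hrp, hr]; exact bdf2_exact_two hn hτn hτn')
    (by rw [hr, hq]; exact fun y hy => abs_bdf2_peano_kernel_le hn hτn hτn' hy)
  rw [hr, hq] at this
  rwa [D2_of_two_le _ hn]

end LocalBounds

end BDF2

open BDF2 Set

/-- `θ̂^{(k)}_{k-j}` is written `doc τ k (k - j) * bdf2 τ j 0`. -/
theorem bdf2_global_consistency_bound
    {E : Type*} [NormedAddCommGroup E] [NormedSpace ℝ E] [CompleteSpace E]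
    (N : ℕ) (τ : ℕ → ℝ) (hτ : ∀ k, 1 ≤ k → k ≤ N → 0 < τ k)
    (u u' u'' u''' : ℝ → E)
    (hu' : ∀ x ∈ Set.Icc (0 : ℝ) (tlv τ N),
      HasDerivWithinAt u (u' x) (Set.Icc (0 : ℝ) (tlv τ N)) x)
    (hu'' : ∀ x ∈ Set.Icc (0 : ℝ) (tlv τ N),
      HasDerivWithinAt u' (u'' x) (Set.Icc (0 : ℝ) (tlv τ N)) x)
    (hu''' : ∀ x ∈ Set.Icc (0 : ℝ) (tlv τ N),
      HasDerivWithinAt u'' (u''' x) (Set.Icc (0 : ℝ) (tlv τ N)) x)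
    (hcont2 : ContinuousOn u'' (Set.Icc (0 : ℝ) (tlv τ N)))
    (hcont3 : ContinuousOn u''' (Set.Icc (0 : ℝ) (tlv τ N))) :
    ∀ n, 1 ≤ n → n ≤ N →
      ∑ k ∈ Finset.Icc 1 n, ∑ j ∈ Finset.Icc 1 k,
          doc τ k (k - j) * ‖D2 τ (fun m => u (tlv τ m)) j - u' (tlv τ j)‖ ≤
        τ 1 * (∑ k ∈ Finset.Icc 1 n, doc τ k (k - 1) * bdf2 τ 1 0) *
            (∫ t in (0 : ℝ)..(tlv τ 1), ‖u'' t‖) +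
          3 / 2 * ∑ j ∈ Finset.Icc 1 n,
            τ j ^ 2 * (∑ k ∈ Finset.Icc j n, doc τ k (k - j) * bdf2 τ j 0) *
              (∫ t in (tlv τ (j - 1))..(tlv τ j), ‖u''' t‖) := by
  intro n hn hnN
  have hsub : ∀ {a b}, a ≤ b → b ≤ N → Icc (tlv τ a) (tlv τ b) ⊆ Icc 0 (tlv τ N) :=
    fun hab hb => Icc_subset_Icc (tlv_nonneg hτ (hab.trans hb)) (tlv_mono hτ hb le_rfl)
  refine doc_weighted_sum_le (fun k hk₁ hk => hτ k hk₁ (hk.trans hnN)) (fun j hj => ?_) ?_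
    (fun j hj => ?_)
  · rw [Finset.mem_Icc] at hj
    exact intervalIntegral.integral_nonneg (tlv_mono hτ (by omega) (by omega))
      fun _ _ => norm_nonneg _
  · exact norm_D2_one_sub_deriv_le hu' hu'' (hτ 1 le_rfl (hn.trans hnN))
      (tlv_zero (τ := τ) ▸ hsub zero_le_one (hn.trans hnN)) hcont2
  · rw [Finset.mem_Icc] at hj
    exact norm_D2_sub_deriv_le hu' hu'' hj.1 (hτ j (by omega) (by omega))
      (hτ (j - 1) (by omega) (by omega)) (hsub (by omega) (by omega)) hu''' hcont3
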